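/- Let P(X,Y,Z) = (-Y-Z)X^3 + (2Y^2+ZY)X^2 + (-Y^3+ZY^2-2Z^2Y+Z^3)X + 2Z^2Y^2 - 3Z^3Y (Baran's quartic model of X_s(13)) and let Q(X,Y,Z) = Y^4 + 5X^4 - 6X^2Y^2 + 6X^3Z + 26X^2YZ + 10XY^2Z - 10Y^3Z - 32X^2Z^2 - 40XYZ^2 + 24Y^2Z^2 + 32XZ^3 - 16YZ^3. Then there exist an invertible matrix M ∈ GL_3(ℚ) and a nonzero rational number c such that P((X,Y,Z)·M) = c·Q(X,Y,Z) as polynomials in ℚ[X,Y,Z]; i.e., the two plane quartics are related by a ℚ-linear change of projective coordinates. -/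

import Mathlib

open MvPolynomial

/-- Baran's homogeneous quartic model of `X_s(13)`, in variables
`X 0, X 1, X 2` (playing the roles of `X, Y, Z`). -/
noncomputable def Ps13 : MvPolynomial (Fin 3) ℚ :=
  (-(X 1) - (X 2))*(X 0)^3 + (2*(X 1)^2 + (X 2)*(X 1))*(X 0)^2
    + (-(X 1)^3 + (X 2)*(X 1)^2 - 2*(X 2)^2*(X 1) + (X 2)^3)*(X 0)
    + 2*(X 2)^2*(X 1)^2 - 3*(X 2)^3*(X 1)

/-- The quartic model of `X_s(13)` used in this paper. -/
noncomputable def Qs13 : MvPolynomial (Fin 3) ℚ :=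
  (X 1)^4 + 5*(X 0)^4 - 6*(X 0)^2*(X 1)^2 + 6*(X 0)^3*(X 2) + 26*(X 0)^2*(X 1)*(X 2)
    + 10*(X 0)*(X 1)^2*(X 2) - 10*(X 1)^3*(X 2) - 32*(X 0)^2*(X 2)^2
    - 40*(X 0)*(X 1)*(X 2)^2 + 24*(X 1)^2*(X 2)^2 + 32*(X 0)*(X 2)^3 - 16*(X 1)*(X 2)^3

theorem sum_C_mul_X_fin_three {R : Type*} [CommSemiring R] (a b c d e f g h i : R) :
    (fun j : Fin 3 => ∑ k : Fin 3,
        C ((!![a, b, c; d, e, f; g, h, i] : Matrix (Fin 3) (Fin 3) R) k j) * X k) =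
      ![C a * X 0 + C d * X 1 + C g * X 2, C b * X 0 + C e * X 1 + C h * X 2,
        C c * X 0 + C f * X 1 + C i * X 2] := by
  funext j
  fin_cases j <;> simp [Fin.sum_univ_three]

/-- Twice the inverse of the matrix of the substitution `(X : Y : Z) ↦ (X - Y : X + Y : X + Z)`
taking `P` to `Q`; the factor `2` absorbs the scalar `2⁴` between the two models. -/
def Xs13ChangeOfCoordinates : Matrix (Fin 3) (Fin 3) ℚ :=
  !![1, -1, -1; 1, 1, -1; 0, 0, 2]

theorem det_Xs13ChangeOfCoordinates : Xs13ChangeOfCoordinates.det = 4 := by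
  simp [Xs13ChangeOfCoordinates, Matrix.det_fin_three]
  norm_num

theorem aeval_Xs13ChangeOfCoordinates_Ps13 :
    aeval (fun j : Fin 3 => ∑ i : Fin 3, C (Xs13ChangeOfCoordinates i j) * X i) Ps13 = Qs13 := by
  rw [Xs13ChangeOfCoordinates, sum_C_mul_X_fin_three, Ps13, Qs13]
  simp only [map_add, map_sub, map_mul, map_neg, map_pow, map_ofNat, map_one, map_zero, aeval_X,
    Matrix.cons_val_zero, Matrix.cons_val_one, Matrix.cons_val_two, Matrix.head_cons,
    Matrix.tail_cons]
  ring

/-- Baran's model `P` and the model `Q` are related by an invertible `ℚ`-linear change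
of projective coordinates: there are `M ∈ GL₃(ℚ)` and `c ∈ ℚˣ` with
`P((X,Y,Z)·M) = c·Q(X,Y,Z)`. -/
theorem Xs13_models_equivalent :
    ∃ (M : Matrix (Fin 3) (Fin 3) ℚ) (c : ℚ), IsUnit M.det ∧ c ≠ 0 ∧
      MvPolynomial.aeval (fun j : Fin 3 => ∑ i : Fin 3, MvPolynomial.C (M i j) * X i)
        Ps13 = MvPolynomial.C c * Qs13 := by
  refine ⟨Xs13ChangeOfCoordinates, 1, ?_, one_ne_zero, ?_⟩
  · rw [det_Xs13ChangeOfCoordinates]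
    exact isUnit_iff_ne_zero.mpr four_ne_zero
  · rw [aeval_Xs13ChangeOfCoordinates_Ps13, map_one, one_mul]
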